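/- arXiv:1105.1571 — 3 statements merged into one kernel-verified Lean document; each statement's English description precedes it below -/
import Mathlib

section
/- Let ψ : ℝ → ℂ be a Schwartz function whose Fourier transform ψ̂ is supported in [1−Δ, 1+Δ] with 0 < Δ < 1. Let η > 0, A ≠ 0, and f(t) = A·cos(2πηt). Then for every a > 0 and b ∈ ℝ with W_f(a,b) ≠ 0, the map b ↦ W_f(a,b) is differentiable at b and the phase transform satisfies ω_f(a,b) := ∂_b W_f(a,b) / (2πi·W_f(a,b)) = η. That is, the synchrosqueezing phase transform recovers the instantaneous frequency of a pure harmonic exactly. -/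
open MeasureTheory

/-- The continuous wavelet transform
`W_f(a,b) = a^{-1/2} ∫ f(t) conj(ψ((t-b)/a)) dt`. -/
noncomputable def CWT (ψ f : ℝ → ℂ) (a b : ℝ) : ℂ :=
  ((Real.sqrt a : ℝ) : ℂ)⁻¹ * ∫ t : ℝ, f t * (starRingEnd ℂ) (ψ ((t - b) / a))

/-!
Writing `cos` as the mean of the harmonics `e^{±2πiηt}`, the substitution `t = a s + b` turns the
wavelet transform of `e^{2πiξt}` into `√a · e^{2πiξb} · conj (ψ̂ (aξ))`. Since the support of `ψ̂`
lies in `[1 - Δ, 1 + Δ] ⊆ (0, ∞)`, the negative-frequency harmonic contributes nothing, so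
`W_f(a, b) = K e^{2πiηb}`, whose `b`-derivative is `2πiη W_f(a, b)`.
-/

open Complex FourierTransform ComplexConjugate
open scoped Real

theorem integral_eq_smul_integral_comp_mul_add {E : Type*} [NormedAddCommGroup E]
    [NormedSpace ℝ E] (g : ℝ → E) {a : ℝ} (ha : 0 < a) (b : ℝ) :
    ∫ t, g t = a • ∫ s, g (a * s + b) := by
  rw [Measure.integral_comp_mul_left (fun x => g (x + b)), integral_add_right_eq_self, abs_inv,
    abs_of_pos ha, smul_smul, mul_inv_cancel₀ ha.ne', one_smul]

theorem conj_fourier_eq_integral (ψ : ℝ → ℂ) (w : ℝ) :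
    conj (𝓕 ψ w) = ∫ s : ℝ, exp (↑(2 * π * w * s) * I) * conj (ψ s) := by
  rw [Real.fourier_real_eq_integral_exp_smul, ← integral_conj]
  congr 1 with s
  rw [smul_eq_mul, map_mul, ← exp_conj, map_mul, conj_ofReal, conj_I]
  congr 2
  push_cast
  ring

theorem integrable_exp_mul_conj_comp_div {ψ : ℝ → ℂ} (hψ : Integrable ψ) {a : ℝ} (ha : a ≠ 0)
    (b ξ : ℝ) :
    Integrable fun t : ℝ => exp (↑(2 * π * ξ * t) * I) * conj (ψ ((t - b) / a)) := by
  have hconj : Integrable fun t : ℝ => conj (ψ ((t - b) / a)) :=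
    conjCLE.toContinuousLinearMap.integrable_comp ((hψ.comp_div ha).comp_sub_right b)
  refine hconj.bdd_mul (c := 1) (by fun_prop) (Filter.Eventually.of_forall fun t => ?_)
  rw [norm_exp_ofReal_mul_I]

theorem integral_exp_mul_conj_comp_div (ψ : ℝ → ℂ) {a : ℝ} (ha : 0 < a) (b ξ : ℝ) :
    ∫ t : ℝ, exp (↑(2 * π * ξ * t) * I) * conj (ψ ((t - b) / a)) =
      a * exp (↑(2 * π * ξ * b) * I) * conj (𝓕 ψ (a * ξ)) := by
  rw [integral_eq_smul_integral_comp_mul_add _ ha b, conj_fourier_eq_integral, real_smul,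
    ← integral_const_mul, ← integral_const_mul]
  refine integral_congr_ae (Filter.Eventually.of_forall fun s => ?_)
  dsimp only
  rw [add_sub_cancel_right, mul_div_cancel_left₀ _ ha.ne', mul_assoc (a : ℂ),
    ← mul_assoc (exp _), ← exp_add]
  congr 4
  push_cast
  ring

theorem cwt_cos {ψ : ℝ → ℂ} (hψ : Integrable ψ) {a : ℝ} (ha : 0 < a) (A η b : ℝ) :
    CWT ψ (fun t => (A : ℂ) * (Real.cos (2 * π * η * t) : ℝ)) a b =
      A / 2 * √a * (conj (𝓕 ψ (a * η)) * exp (↑(2 * π * η * b) * I) +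
        conj (𝓕 ψ (a * -η)) * exp (↑(2 * π * -η * b) * I)) := by
  have hcos : ∀ t : ℝ, (A : ℂ) * (Real.cos (2 * π * η * t) : ℝ) =
      A / 2 * exp (↑(2 * π * η * t) * I) + A / 2 * exp (↑(2 * π * -η * t) * I) := by
    intro t
    rw [ofReal_cos, Complex.cos]
    push_cast
    ring_nf
  have hsqrt : (√a : ℂ) ≠ 0 := ofReal_ne_zero.2 (Real.sqrt_pos.2 ha).ne'
  have ha_sq : (a : ℂ) = √a * √a := by rw [← ofReal_mul, Real.mul_self_sqrt ha.le]
  unfold CWT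
  simp_rw [hcos, add_mul, mul_assoc ((A : ℂ) / 2)]
  rw [integral_add ((integrable_exp_mul_conj_comp_div hψ ha.ne' b η).const_mul _)
      ((integrable_exp_mul_conj_comp_div hψ ha.ne' b (-η)).const_mul _),
    integral_const_mul, integral_const_mul, integral_exp_mul_conj_comp_div ψ ha,
    integral_exp_mul_conj_comp_div ψ ha, ha_sq]
  field_simp

theorem hasDerivAt_mul_exp_ofReal_mul_I (K : ℂ) (ξ b : ℝ) :
    HasDerivAt (fun y : ℝ => K * exp (↑(2 * π * ξ * y) * I))
      (2 * π * I * ξ * (K * exp (↑(2 * π * ξ * b) * I))) b := by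
  have hphase : HasDerivAt (fun y : ℝ => (↑(2 * π * ξ * y) : ℂ) * I) (↑(2 * π * ξ) * I) b := by
    simpa using ((hasDerivAt_id b).const_mul (2 * π * ξ)).ofReal_comp.mul_const I
  exact (hphase.cexp.const_mul K).congr_deriv (by push_cast; ring)

theorem stmt1_general (ψ : SchwartzMap ℝ ℂ) (Δ : ℝ) (hΔ1 : Δ < 1)
    (hsupp : ∀ ξ : ℝ, ξ ∉ Set.Icc (1 - Δ) (1 + Δ) → FourierTransform.fourier (⇑ψ : ℝ → ℂ) ξ = 0)
    (η A : ℝ) (hη : 0 < η) (f : ℝ → ℂ)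
    (hf : ∀ t : ℝ, f t = (A : ℂ) * (Real.cos (2 * Real.pi * η * t) : ℝ)) :
    ∀ a : ℝ, 0 < a → ∀ b : ℝ, CWT (⇑ψ) f a b ≠ 0 →
      ∃ W' : ℂ, HasDerivAt (fun b' : ℝ => CWT (⇑ψ) f a b') W' b ∧
        W' / (2 * Real.pi * Complex.I * CWT (⇑ψ) f a b) = (η : ℂ) := by
  intro a ha b hW
  have hneg : 𝓕 (ψ : ℝ → ℂ) (a * -η) = 0 :=
    hsupp _ fun h => by nlinarith [h.1, mul_pos ha hη]
  set K : ℂ := A / 2 * √a * conj (𝓕 (ψ : ℝ → ℂ) (a * η))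
  have hW_eq : (fun b' : ℝ => CWT ψ f a b') = fun b' => K * exp (↑(2 * π * η * b') * I) := by
    ext b'
    rw [funext hf, cwt_cos ψ.integrable ha, hneg, map_zero, zero_mul, add_zero, ← mul_assoc]
  refine ⟨_, hW_eq ▸ hasDerivAt_mul_exp_ofReal_mul_I K η b, ?_⟩
  rw [congrFun hW_eq b] at hW ⊢
  have hK : K ≠ 0 := left_ne_zero_of_mul hW
  field_simp

theorem stmt1 (ψ : SchwartzMap ℝ ℂ) (Δ : ℝ) (hΔ0 : 0 < Δ) (hΔ1 : Δ < 1)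
    (hsupp : ∀ ξ : ℝ, ξ ∉ Set.Icc (1 - Δ) (1 + Δ) → FourierTransform.fourier (⇑ψ : ℝ → ℂ) ξ = 0)
    (η A : ℝ) (hη : 0 < η) (hA : A ≠ 0) (f : ℝ → ℂ)
    (hf : ∀ t : ℝ, f t = (A : ℂ) * (Real.cos (2 * Real.pi * η * t) : ℝ)) :
    ∀ a : ℝ, 0 < a → ∀ b : ℝ, CWT (⇑ψ) f a b ≠ 0 →
      ∃ W' : ℂ, HasDerivAt (fun b' : ℝ => CWT (⇑ψ) f a b') W' b ∧
        W' / (2 * Real.pi * Complex.I * CWT (⇑ψ) f a b) = (η : ℂ) :=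
  stmt1_general ψ Δ hΔ1 hsupp η A hη f hf
end

section
/- Let ψ : ℝ → ℂ be a Schwartz function, and fix ε > 0 and 0 < c₁ ≤ M₂. Let g(t) = A(t)·exp(2πiφ(t)) where A : ℝ → ℝ is C¹, bounded and positive, φ : ℝ → ℝ is C² with c₁ ≤ φ'(t) ≤ M₂, |A'(t)| ≤ ε·φ'(t) and |φ''(t)| ≤ ε·φ'(t) for all t. Then for all a > 0 and b ∈ ℝ, |W_g(a,b) − A(b)·exp(2πiφ(b))·a^{1/2}·conj(ψ̂(aφ'(b)))| ≤ ε·M₂·a^{3/2}·(I₁ + π·‖A‖∞·a·I₂), where I₁ = ∫_ℝ |x|·|ψ(x)| dx, I₂ = ∫_ℝ x²·|ψ(x)| dx, and ‖A‖∞ = sup_t A(t). -/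
/-!
After the substitution `t = b + a x`, `W_g(a,b) = √a ∫ g(b + a x) conj ψ(x) dx`, and the main
term is `√a` times the same integral with `g` replaced by its linearisation
`A(b) exp(2πi (φ(b) + a φ'(b) x))` at `b`: this is how `conj ψ̂(a φ'(b))` arises. By the mean value
theorem and Taylor's theorem the two integrands differ by at most
`(ε M₂ a |x| + π |A(b)| ε M₂ a² x²) |ψ(x)|`, and integrating gives the moments `I₁` and `I₂`.
-/

open MeasureTheory

open scoped Real ComplexConjugate FourierTransform SchwartzMap
open Complex (I exp)

theorem norm_exp_two_pi_I_mul (x : ℝ) : ‖exp (2 * π * I * x)‖ = 1 := by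
  simp [Complex.norm_exp]

theorem norm_exp_two_pi_I_sub_le (x y : ℝ) :
    ‖exp (2 * π * I * x) - exp (2 * π * I * y)‖ ≤ 2 * π * |x - y| := by
  have h : exp (2 * π * I * x) - exp (2 * π * I * y)
      = exp (↑(2 * π * y) * I) * (exp (I * ↑(2 * π * (x - y))) - 1) := by
    rw [mul_sub, mul_one, ← Complex.exp_add]; push_cast; ring_nf
  rw [h, norm_mul, Complex.norm_exp_ofReal_mul_I, one_mul]
  refine (Real.norm_exp_I_mul_ofReal_sub_one_le).trans_eq ?_
  rw [Real.norm_eq_abs, abs_mul, abs_of_pos Real.two_pi_pos]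

theorem abs_sub_taylor_one_le {f : ℝ → ℝ} {C : ℝ} (hf : ContDiff ℝ 2 f)
    (hC : ∀ x, |deriv (deriv f) x| ≤ C) (x₀ x : ℝ) :
    |f x - (f x₀ + deriv f x₀ * (x - x₀))| ≤ C / 2 * (x - x₀) ^ 2 := by
  rcases eq_or_ne x₀ x with rfl | hx
  · simp
  obtain ⟨x', -, hx'⟩ := taylor_mean_remainder_lagrange_iteratedDeriv (n := 1) hx hf.contDiffOn
  have htaylor : taylorWithinEval f 1 (Set.uIcc x₀ x) x₀ x = f x₀ + deriv f x₀ * (x - x₀) := by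
    rw [taylorWithinEval_succ, taylor_within_zero_eval, iteratedDerivWithin_one,
      (hf.differentiable two_ne_zero x₀).derivWithin (uniqueDiffOn_uIcc hx x₀ Set.left_mem_uIcc)]
    simp [mul_comm]
  rw [htaylor, iteratedDeriv_succ, iteratedDeriv_one] at hx'
  calc |f x - (f x₀ + deriv f x₀ * (x - x₀))|
      = |deriv (deriv f) x'| / 2 * (x - x₀) ^ 2 := by
        rw [hx', abs_div, abs_mul, abs_pow, pow_two, abs_mul_abs_self]
        norm_num [Nat.factorial]; ring
    _ ≤ C / 2 * (x - x₀) ^ 2 := by gcongr; exact hC x'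

theorem norm_mul_exp_sub_linearization_le {A φ : ℝ → ℝ} {C_A C_φ : ℝ}
    (hA : Differentiable ℝ A) (hA' : ∀ t, |deriv A t| ≤ C_A)
    (hφ : ContDiff ℝ 2 φ) (hφ'' : ∀ t, |deriv (deriv φ) t| ≤ C_φ) (b t : ℝ) :
    ‖A t * exp (2 * π * I * φ t) - A b * exp (2 * π * I * ↑(φ b + deriv φ b * (t - b)))‖ ≤
      C_A * |t - b| + π * |A b| * C_φ * (t - b) ^ 2 := by
  have hsplit : (A t : ℂ) * exp (2 * π * I * φ t) -
        A b * exp (2 * π * I * ↑(φ b + deriv φ b * (t - b)))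
      = (A t - A b : ℝ) * exp (2 * π * I * φ t)
        + A b * (exp (2 * π * I * φ t) - exp (2 * π * I * ↑(φ b + deriv φ b * (t - b)))) := by
    push_cast; ring
  have hamp : |A t - A b| ≤ C_A * |t - b| := by
    simpa only [Real.norm_eq_abs] using
      convex_univ.norm_image_sub_le_of_norm_deriv_le (fun x _ => hA x) (fun x _ => hA' x)
        (Set.mem_univ b) (Set.mem_univ t)
  have hphase := (norm_exp_two_pi_I_sub_le (φ t) (φ b + deriv φ b * (t - b))).trans
    (mul_le_mul_of_nonneg_left (abs_sub_taylor_one_le hφ hφ'' b t) Real.two_pi_pos.le)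
  rw [hsplit]
  refine (norm_add_le _ _).trans ?_
  rw [norm_mul, norm_mul, Complex.norm_real, Complex.norm_real, Real.norm_eq_abs,
    Real.norm_eq_abs, norm_exp_two_pi_I_mul, mul_one]
  calc |A t - A b| + |A b| * ‖_‖
      ≤ C_A * |t - b| + |A b| * (2 * π * (C_φ / 2 * (t - b) ^ 2)) := by gcongr
    _ = C_A * |t - b| + π * |A b| * C_φ * (t - b) ^ 2 := by ring

namespace SchwartzMap

variable (ψ : 𝓢(ℝ, ℂ))

theorem integrable_abs_mul_norm : Integrable fun x => |x| * ‖ψ x‖ := by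
  simpa only [Real.norm_eq_abs, pow_one] using ψ.integrable_pow_mul volume 1

theorem integrable_sq_mul_norm : Integrable fun x => x ^ 2 * ‖ψ x‖ := by
  simpa only [Real.norm_eq_abs, sq_abs] using ψ.integrable_pow_mul volume 2

theorem integrable_moments_bound (α β : ℝ) :
    Integrable fun x => α * (|x| * ‖ψ x‖) + β * (x ^ 2 * ‖ψ x‖) :=
  (ψ.integrable_abs_mul_norm.const_mul α).add (ψ.integrable_sq_mul_norm.const_mul β)

variable {F : ℝ → ℂ} {α β : ℝ}

theorem integrable_of_norm_le_moments (hF : AEStronglyMeasurable F)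
    (hle : ∀ x, ‖F x‖ ≤ α * (|x| * ‖ψ x‖) + β * (x ^ 2 * ‖ψ x‖)) : Integrable F :=
  (ψ.integrable_moments_bound α β).mono' hF (.of_forall hle)

theorem norm_integral_le_moments
    (hle : ∀ x, ‖F x‖ ≤ α * (|x| * ‖ψ x‖) + β * (x ^ 2 * ‖ψ x‖)) :
    ‖∫ x, F x‖ ≤ α * (∫ x, |x| * ‖ψ x‖) + β * ∫ x, x ^ 2 * ‖ψ x‖ := by
  refine (norm_integral_le_of_norm_le (ψ.integrable_moments_bound α β) (.of_forall hle)).trans_eq ?_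
  rw [integral_add (ψ.integrable_abs_mul_norm.const_mul α) (ψ.integrable_sq_mul_norm.const_mul β),
    integral_const_mul, integral_const_mul]

end SchwartzMap

theorem CWT_eq_sqrt_mul_integral (ψ f : ℝ → ℂ) {a : ℝ} (ha : 0 < a) (b : ℝ) :
    CWT ψ f a b = √a * ∫ x, f (b + a * x) * conj (ψ x) := by
  have hsubst : ∫ x, f (b + a * x) * conj (ψ x) = a⁻¹ • ∫ t, f t * conj (ψ ((t - b) / a)) := by
    have h := Measure.integral_comp_mul_left (fun y => f (b + y) * conj (ψ ((b + y - b) / a))) a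
    rw [integral_add_left_eq_self (fun t => f t * conj (ψ ((t - b) / a))) b,
      abs_of_pos (inv_pos.2 ha)] at h
    simpa only [add_sub_cancel_left, mul_div_cancel_left₀ _ ha.ne'] using h
  have hsqrt : (a : ℂ) = √a * √a := by exact_mod_cast (Real.mul_self_sqrt ha.le).symm
  have hsqrt0 : (√a : ℂ) ≠ 0 := by exact_mod_cast (Real.sqrt_pos.2 ha).ne'
  rw [hsubst, Complex.real_smul, ← mul_assoc, CWT]
  push_cast
  rw [hsqrt]
  field_simp

theorem mul_exp_mul_conj_fourier_eq_integral (ψ : ℝ → ℂ) (c : ℂ) (θ ξ : ℝ) :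
    c * exp (2 * π * I * θ) * conj (𝓕 ψ ξ) =
      ∫ x : ℝ, c * exp (2 * π * I * ↑(θ + ξ * x)) * conj (ψ x) := by
  rw [Real.fourier_real_eq_integral_exp_smul, ← integral_conj, ← integral_const_mul]
  congr 1 with x
  rw [smul_eq_mul, map_mul, ← Complex.exp_conj, mul_assoc, ← mul_assoc (exp _), ← Complex.exp_add,
    ← mul_assoc]
  congr 3
  simp only [map_mul, Complex.conj_ofReal, Complex.conj_I]
  push_cast
  ring

theorem norm_CWT_sub_le (ψ : 𝓢(ℝ, ℂ)) {A φ : ℝ → ℝ} {C_A C_φ : ℝ}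
    (hA : Differentiable ℝ A) (hA' : ∀ t, |deriv A t| ≤ C_A)
    (hφ : ContDiff ℝ 2 φ) (hφ'' : ∀ t, |deriv (deriv φ) t| ≤ C_φ) {a : ℝ} (ha : 0 < a) (b : ℝ) :
    ‖CWT ψ (fun t => A t * exp (2 * π * I * φ t)) a b -
        A b * exp (2 * π * I * φ b) * √a * conj (𝓕 (⇑ψ) (a * deriv φ b))‖ ≤
      √a * (C_A * a * (∫ x, |x| * ‖ψ x‖) + π * |A b| * C_φ * a ^ 2 * ∫ x, x ^ 2 * ‖ψ x‖) := by
  set main : ℝ → ℂ := fun x => A b * exp (2 * π * I * ↑(φ b + a * deriv φ b * x)) * conj (ψ x)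
  set err : ℝ → ℂ := fun x => A (b + a * x) * exp (2 * π * I * φ (b + a * x)) * conj (ψ x) - main x
  have herr_le : ∀ x, ‖err x‖ ≤
      C_A * a * (|x| * ‖ψ x‖) + π * |A b| * C_φ * a ^ 2 * (x ^ 2 * ‖ψ x‖) := by
    intro x
    have h := norm_mul_exp_sub_linearization_le hA hA' hφ hφ'' b (b + a * x)
    rw [add_sub_cancel_left, abs_mul, abs_of_pos ha] at h
    calc ‖err x‖ = ‖A (b + a * x) * exp (2 * π * I * φ (b + a * x)) -
          A b * exp (2 * π * I * ↑(φ b + deriv φ b * (a * x)))‖ * ‖ψ x‖ := by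
          simp only [err, main, ← sub_mul, norm_mul, Complex.norm_conj]
          push_cast
          ring_nf
      _ ≤ (C_A * (a * |x|) + π * |A b| * C_φ * (a * x) ^ 2) * ‖ψ x‖ := by gcongr
      _ = _ := by ring
  have hmain_int : Integrable main := by
    refine (ψ.integrable.norm.const_mul |A b|).mono' (by fun_prop) (.of_forall fun x => ?_)
    rw [norm_mul, norm_mul, norm_exp_two_pi_I_mul, Complex.norm_real, Complex.norm_conj, mul_one,
      Real.norm_eq_abs]
  have herr_int : Integrable err := by
    have hA_cont := hA.continuous
    have hφ_cont := hφ.continuous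
    exact ψ.integrable_of_norm_le_moments (by fun_prop) herr_le
  have hg_int : Integrable fun x => A (b + a * x) * exp (2 * π * I * φ (b + a * x)) * conj (ψ x) :=
    (herr_int.add hmain_int).congr (.of_forall fun x => sub_add_cancel _ (main x))
  have hdecomp : CWT ψ (fun t => A t * exp (2 * π * I * φ t)) a b -
      A b * exp (2 * π * I * φ b) * √a * conj (𝓕 (⇑ψ) (a * deriv φ b)) = √a * ∫ x, err x := by
    rw [CWT_eq_sqrt_mul_integral _ _ ha, mul_right_comm _ (√a : ℂ), mul_comm _ (√a : ℂ),
      mul_exp_mul_conj_fourier_eq_integral, ← mul_sub,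
      ← integral_sub hg_int hmain_int]
  rw [hdecomp, norm_mul, Complex.norm_real, Real.norm_of_nonneg (Real.sqrt_nonneg a)]
  gcongr
  exact ψ.norm_integral_le_moments herr_le

theorem stmt3_general (ψ : SchwartzMap ℝ ℂ) (ε M₂ : ℝ)
    (hε : 0 < ε)
    (A : ℝ → ℝ) (φ : ℝ → ℝ) (g : ℝ → ℂ)
    (hg : ∀ t : ℝ, g t = (A t : ℂ) * Complex.exp (2 * Real.pi * Complex.I * φ t))
    (hA : ContDiff ℝ 1 A) (hAbd : BddAbove (Set.range A)) (hApos : ∀ t : ℝ, 0 < A t)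
    (hφ : ContDiff ℝ 2 φ)
    (hφ'hi : ∀ t : ℝ, deriv φ t ≤ M₂)
    (hA' : ∀ t : ℝ, |deriv A t| ≤ ε * deriv φ t)
    (hφ'' : ∀ t : ℝ, |deriv (deriv φ) t| ≤ ε * deriv φ t)
    (I₁ I₂ Asup : ℝ)
    (hI₁ : I₁ = ∫ x : ℝ, |x| * ‖ψ x‖) (hI₂ : I₂ = ∫ x : ℝ, x ^ 2 * ‖ψ x‖)
    (hAsup : Asup = sSup (Set.range A)) :
    ∀ a : ℝ, 0 < a → ∀ b : ℝ,
      ‖CWT (⇑ψ) g a b -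
          (A b : ℂ) * Complex.exp (2 * Real.pi * Complex.I * φ b) *
            ((Real.sqrt a : ℝ) : ℂ) *
            (starRingEnd ℂ) (FourierTransform.fourier (⇑ψ : ℝ → ℂ) (a * deriv φ b))‖ ≤
        ε * M₂ * Real.sqrt a ^ 3 * (I₁ + Real.pi * Asup * a * I₂) := by
  intro a ha b
  obtain rfl : g = fun t => (A t : ℂ) * Complex.exp (2 * Real.pi * Complex.I * φ t) := funext hg
  have hεφ' : ∀ t, ε * deriv φ t ≤ ε * M₂ := fun t => mul_le_mul_of_nonneg_left (hφ'hi t) hε.le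
  have hA'_le : ∀ t, |deriv A t| ≤ ε * M₂ := fun t => (hA' t).trans (hεφ' t)
  have hεM₂ : 0 ≤ ε * M₂ := (abs_nonneg _).trans (hA'_le b)
  have hAb : |A b| ≤ Asup := by
    rw [abs_of_pos (hApos b), hAsup]
    exact le_csSup hAbd ⟨b, rfl⟩
  have hI₂_nonneg : 0 ≤ I₂ := hI₂ ▸ integral_nonneg fun x => by positivity
  have hsqrt_cube : √a ^ 3 = √a * a := by rw [pow_succ', pow_two, Real.mul_self_sqrt ha.le]
  refine (norm_CWT_sub_le ψ (hA.differentiable one_ne_zero) hA'_le hφ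
    (fun t => (hφ'' t).trans (hεφ' t)) ha b).trans ?_
  rw [← hI₁, ← hI₂, hsqrt_cube]
  calc √a * (ε * M₂ * a * I₁ + π * |A b| * (ε * M₂) * a ^ 2 * I₂)
      ≤ √a * (ε * M₂ * a * I₁ + π * Asup * (ε * M₂) * a ^ 2 * I₂) := by gcongr
    _ = ε * M₂ * (√a * a) * (I₁ + π * Asup * a * I₂) := by ring

theorem stmt3 (ψ : SchwartzMap ℝ ℂ) (ε c₁ M₂ : ℝ)
    (hε : 0 < ε) (hc₁ : 0 < c₁) (hc₁M₂ : c₁ ≤ M₂)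
    (A : ℝ → ℝ) (φ : ℝ → ℝ) (g : ℝ → ℂ)
    (hg : ∀ t : ℝ, g t = (A t : ℂ) * Complex.exp (2 * Real.pi * Complex.I * φ t))
    (hA : ContDiff ℝ 1 A) (hAbd : BddAbove (Set.range A)) (hApos : ∀ t : ℝ, 0 < A t)
    (hφ : ContDiff ℝ 2 φ)
    (hφ'lo : ∀ t : ℝ, c₁ ≤ deriv φ t) (hφ'hi : ∀ t : ℝ, deriv φ t ≤ M₂)
    (hA' : ∀ t : ℝ, |deriv A t| ≤ ε * deriv φ t)
    (hφ'' : ∀ t : ℝ, |deriv (deriv φ) t| ≤ ε * deriv φ t)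
    (I₁ I₂ Asup : ℝ)
    (hI₁ : I₁ = ∫ x : ℝ, |x| * ‖ψ x‖) (hI₂ : I₂ = ∫ x : ℝ, x ^ 2 * ‖ψ x‖)
    (hAsup : Asup = sSup (Set.range A)) :
    ∀ a : ℝ, 0 < a → ∀ b : ℝ,
      ‖CWT (⇑ψ) g a b -
          (A b : ℂ) * Complex.exp (2 * Real.pi * Complex.I * φ b) *
            ((Real.sqrt a : ℝ) : ℂ) *
            (starRingEnd ℂ) (FourierTransform.fourier (⇑ψ : ℝ → ℂ) (a * deriv φ b))‖ ≤
        ε * M₂ * Real.sqrt a ^ 3 * (I₁ + Real.pi * Asup * a * I₂) :=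
  stmt3_general ψ ε M₂ hε A φ g hg hA hAbd hApos hφ hφ'hi hA' hφ'' I₁ I₂ Asup hI₁ hI₂ hAsup
end

section
/- Let ψ : ℝ → ℂ be a Schwartz function whose Fourier transform ψ̂ is supported in [1−Δ, 1+Δ] with 0 < Δ < 1, and let f(t) = A(t)·cos(2πφ(t)) be an intrinsic-mode-type function with accuracy ε (parameters c₁, M₂). Then for all a > 0 and b ∈ ℝ, the map b ↦ W_f(a,b) is differentiable and |∂_b W_f(a,b) − πi·A(b)·φ'(b)·exp(2πiφ(b))·a^{1/2}·conj(ψ̂(aφ'(b)))| ≤ ε·M₂·a^{1/2}·(I₁' + π·‖A‖∞·a·I₂'), where I₁' = ∫_ℝ |x|·|ψ'(x)| dx and I₂' = ∫_ℝ x²·|ψ'(x)| dx. -/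
open MeasureTheory

/-! Differentiating under the integral sign moves the `b`-derivative onto the wavelet:
`∂_b W_f(a,b) = -a⁻¹ W_{ψ'} f(a,b)`. Near `t = b` the signal is the frozen-phase cosine
`f₀(t) = A(b) cos(2π(φ(b) + φ'(b)(t - b)))` up to `εM₂(|t - b| + π‖A‖∞ (t - b)²)`, by the mean
value theorem for `A` and a first-order Taylor bound for `φ`. For `f₀` the transform is explicit:
expanding the cosine produces the conjugated Fourier transform of `ψ'` at `±aφ'(b)`, the negative
frequency drops out by the support of `ψ̂`, and `ψ'^(ξ) = 2πiξ ψ̂(ξ)`. Integrating the error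
against `|ψ'((t - b)/a)|` gives the moments `I₁'` and `I₂'`. -/
open Real ComplexConjugate FourierTransform
open scoped SchwartzMap

theorem abs_sub_le_mul_abs_sub_of_abs_deriv_le {g : ℝ → ℝ} (hg : Differentiable ℝ g) {K : ℝ}
    (hK : ∀ x, |deriv g x| ≤ K) (s t : ℝ) : |g s - g t| ≤ K * |s - t| :=
  convex_univ.norm_image_sub_le_of_norm_deriv_le (fun x _ => hg x) (fun x _ => hK x)
    (Set.mem_univ t) (Set.mem_univ s)

theorem abs_integral_abs_sub (b t : ℝ) : |(∫ s in b..t, |s - b|)| = (t - b) ^ 2 / 2 := by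
  rcases le_total b t with hbt | htb
  · rw [intervalIntegral.integral_congr (g := fun s => s - b) fun s hs => by
        rw [Set.uIcc_of_le hbt] at hs; exact abs_of_nonneg (sub_nonneg.2 hs.1),
      intervalIntegral.integral_comp_sub_right (fun s => s), integral_id, sub_self,
      zero_pow two_ne_zero, sub_zero, abs_of_nonneg (by positivity)]
  · rw [intervalIntegral.integral_symm, abs_neg,
      intervalIntegral.integral_congr (g := fun s => b - s) fun s hs => by
        rw [Set.uIcc_of_le htb] at hs; rw [abs_of_nonpos (sub_nonpos.2 hs.2), neg_sub],
      intervalIntegral.integral_comp_sub_left (fun s => s), integral_id, sub_self,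
      zero_pow two_ne_zero, sub_zero, abs_of_nonneg (by positivity)]
    ring

theorem abs_sub_sub_deriv_mul_le {φ : ℝ → ℝ} (hφ : Differentiable ℝ φ)
    (hφ' : Differentiable ℝ (deriv φ)) {K : ℝ} (hK : ∀ x, |deriv (deriv φ) x| ≤ K) (b t : ℝ) :
    |φ t - φ b - deriv φ b * (t - b)| ≤ K / 2 * (t - b) ^ 2 := by
  have hφ'_int : IntervalIntegrable (deriv φ) volume b t := hφ'.continuous.intervalIntegrable b t
  have hrem : φ t - φ b - deriv φ b * (t - b) = ∫ s in b..t, (deriv φ s - deriv φ b) := by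
    rw [intervalIntegral.integral_sub hφ'_int intervalIntegrable_const,
      intervalIntegral.integral_deriv_eq_sub (fun x _ => hφ x) hφ'_int,
      intervalIntegral.integral_const, smul_eq_mul, mul_comm]
  calc |φ t - φ b - deriv φ b * (t - b)|
      ≤ |(∫ s in b..t, K * |s - b|)| := by
        rw [hrem]
        refine intervalIntegral.norm_integral_le_abs_of_norm_le
          (f := fun s => deriv φ s - deriv φ b)
          (ae_of_all _ fun s => abs_sub_le_mul_abs_sub_of_abs_deriv_le hφ' hK s b) ?_
        exact (by fun_prop : Continuous fun s => K * |s - b|).intervalIntegrable b t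
    _ = K / 2 * (t - b) ^ 2 := by
        have hK0 : 0 ≤ K := (abs_nonneg _).trans (hK b)
        rw [intervalIntegral.integral_const_mul, abs_mul, abs_of_nonneg hK0,
          abs_integral_abs_sub]
        ring

theorem abs_mul_cos_sub_mul_cos_le {A φ : ℝ → ℝ} (hA : Differentiable ℝ A)
    (hφ : Differentiable ℝ φ) (hφ' : Differentiable ℝ (deriv φ)) {K₁ K₂ M : ℝ}
    (hA' : ∀ t, |deriv A t| ≤ K₁) (hφ'' : ∀ t, |deriv (deriv φ) t| ≤ K₂) {b : ℝ}
    (hAb : |A b| ≤ M) (t : ℝ) :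
    |A t * cos (2 * π * φ t) - A b * cos (2 * π * (φ b + deriv φ b * (t - b)))|
      ≤ K₁ * |t - b| + π * M * K₂ * (t - b) ^ 2 := by
  have hcos : |cos (2 * π * φ t) - cos (2 * π * (φ b + deriv φ b * (t - b)))|
      ≤ 2 * π * (K₂ / 2 * (t - b) ^ 2) :=
    calc _ ≤ |2 * π * φ t - 2 * π * (φ b + deriv φ b * (t - b))| := abs_cos_sub_cos_le _ _
      _ = 2 * π * |φ t - φ b - deriv φ b * (t - b)| := by
        rw [← abs_of_pos two_pi_pos, ← abs_mul, abs_of_pos two_pi_pos]; ring_nf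
      _ ≤ 2 * π * (K₂ / 2 * (t - b) ^ 2) := by
        gcongr; exact abs_sub_sub_deriv_mul_le hφ hφ' hφ'' b t
  calc _ = |(A t - A b) * cos (2 * π * φ t)
          + A b * (cos (2 * π * φ t) - cos (2 * π * (φ b + deriv φ b * (t - b))))| := by ring_nf
    _ ≤ |A t - A b| * 1 + M * (2 * π * (K₂ / 2 * (t - b) ^ 2)) := by
        refine (abs_add_le _ _).trans ?_
        rw [abs_mul, abs_mul]
        gcongr
        · exact abs_cos_le_one _
        · exact (abs_nonneg _).trans hAb
    _ ≤ K₁ * |t - b| + π * M * K₂ * (t - b) ^ 2 := by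
        have := abs_sub_le_mul_abs_sub_of_abs_deriv_le hA hA' t b
        nlinarith

theorem SchwartzMap.exists_norm_le_mul_inv_one_add_sq {E : Type*} [NormedAddCommGroup E]
    [NormedSpace ℝ E] (g : 𝓢(ℝ, E)) : ∃ C, 0 ≤ C ∧ ∀ x, ‖g x‖ ≤ C * (1 + x ^ 2)⁻¹ := by
  obtain ⟨C₀, hC₀, h₀⟩ := g.decay 0 0
  obtain ⟨C₂, hC₂, h₂⟩ := g.decay 2 0
  refine ⟨C₀ + C₂, by positivity, fun x => ?_⟩
  have h0 := h₀ x
  have h2 := h₂ x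
  simp only [pow_zero, one_mul, norm_iteratedFDeriv_zero, Real.norm_eq_abs, sq_abs] at h0 h2
  rw [← div_eq_mul_inv, le_div_iff₀ (by positivity)]
  linarith

theorem SchwartzMap.coe_derivCLM {E : Type*} [NormedAddCommGroup E] [NormedSpace ℝ E]
    (ψ : 𝓢(ℝ, E)) : ⇑(SchwartzMap.derivCLM ℝ E ψ) = deriv ψ :=
  funext (SchwartzMap.derivCLM_apply ℝ ψ)

theorem SchwartzMap.integrable_deriv {E : Type*} [NormedAddCommGroup E] [NormedSpace ℝ E]
    (ψ : 𝓢(ℝ, E)) : Integrable (deriv ψ) :=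
  ψ.coe_derivCLM ▸ (SchwartzMap.derivCLM ℝ E ψ).integrable

theorem inv_one_add_sq_sub_le (u : ℝ) {v : ℝ} (hv : |v| ≤ 1) :
    (1 + (u - v) ^ 2)⁻¹ ≤ 4 * (1 + u ^ 2)⁻¹ := by
  have hv2 : v ^ 2 ≤ 1 := by nlinarith [sq_abs v, abs_nonneg v]
  have h : 1 + u ^ 2 ≤ 4 * (1 + (u - v) ^ 2) := by nlinarith [sq_nonneg (u - 2 * v)]
  calc (1 + (u - v) ^ 2)⁻¹ = 4 * (4 * (1 + (u - v) ^ 2))⁻¹ := by field_simp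
    _ ≤ 4 * (1 + u ^ 2)⁻¹ := by gcongr

theorem cwt_eq_sqrt_mul_integral (g f : ℝ → ℂ) {a : ℝ} (ha : 0 < a) (b : ℝ) :
    CWT g f a b = √a * ∫ x, f (b + a * x) * conj (g x) := by
  set G : ℝ → ℂ := fun t => f t * conj (g ((t - b) / a))
  have hG : ∀ x, f (b + a * x) * conj (g x) = G (b + a * x) := fun x => by
    simp only [G, add_sub_cancel_left, mul_div_cancel_left₀ x ha.ne']
  simp_rw [hG, Measure.integral_comp_mul_left (fun y => G (b + y)), integral_add_left_eq_self,
    abs_of_pos (inv_pos.2 ha), CWT, Complex.real_smul]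
  rw [← mul_assoc, ← Complex.ofReal_inv, ← Complex.ofReal_mul, ← div_eq_mul_inv,
    Real.sqrt_div_self', one_div]

theorem integrable_mul_conj_comp_div {g f : ℝ → ℂ} (hg : Integrable g)
    (hf : AEStronglyMeasurable f) {C : ℝ} (hC : ∀ t, ‖f t‖ ≤ C) {a : ℝ} (ha : a ≠ 0) (b : ℝ) :
    Integrable (fun t => f t * conj (g ((t - b) / a))) :=
  ((Complex.conjCLE : ℂ →L[ℝ] ℂ).integrable_comp ((hg.comp_div ha).comp_sub_right b)).bdd_mul
    hf (ae_of_all _ hC)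

theorem cwt_sub {g f₁ f₂ : ℝ → ℂ} {a b : ℝ}
    (h₁ : Integrable (fun t => f₁ t * conj (g ((t - b) / a))))
    (h₂ : Integrable (fun t => f₂ t * conj (g ((t - b) / a)))) :
    CWT g f₁ a b - CWT g f₂ a b = CWT g (f₁ - f₂) a b := by
  simp only [CWT, ← mul_sub, ← integral_sub h₁ h₂, Pi.sub_apply, sub_mul]

theorem norm_cwt_le {g h : ℝ → ℂ} {a : ℝ} (ha : 0 < a) (b : ℝ) {w : ℝ → ℝ}
    (hw : Integrable fun x => w x * ‖g x‖) (hh : ∀ x, ‖h (b + a * x)‖ ≤ w x) :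
    ‖CWT g h a b‖ ≤ √a * ∫ x, w x * ‖g x‖ := by
  rw [cwt_eq_sqrt_mul_integral g h ha, norm_mul, Complex.norm_real, Real.norm_of_nonneg
    (Real.sqrt_nonneg a)]
  gcongr
  refine norm_integral_le_of_norm_le hw (ae_of_all _ fun x => ?_)
  rw [norm_mul, RCLike.norm_conj]
  gcongr
  exact hh x

theorem conj_fourier_eq_integral_s6 (g : ℝ → ℂ) (ξ : ℝ) :
    conj (𝓕 g ξ) = ∫ x : ℝ, Complex.exp (2 * π * Complex.I * ξ * x) * conj (g x) := by
  rw [Real.fourier_real_eq_integral_exp_smul, ← integral_conj]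
  congr 1
  ext x
  rw [smul_eq_mul, map_mul, ← Complex.exp_conj, map_mul, Complex.conj_I, Complex.conj_ofReal]
  push_cast
  ring_nf

theorem integral_cos_mul_conj {g : ℝ → ℂ} (hg : Integrable g) (θ ξ : ℝ) :
    ∫ x : ℝ, (cos (2 * π * (θ + ξ * x)) : ℂ) * conj (g x)
      = (Complex.exp (2 * π * Complex.I * θ) * conj (𝓕 g ξ)
        + Complex.exp (-(2 * π * Complex.I * θ)) * conj (𝓕 g (-ξ))) / 2 := by
  have hexp : ∀ η : ℝ, Integrable fun x : ℝ =>
      Complex.exp (2 * π * Complex.I * η * x) * conj (g x) := fun η =>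
    ((Complex.conjCLE : ℂ →L[ℝ] ℂ).integrable_comp hg).bdd_mul
      (by fun_prop : Continuous fun x : ℝ =>
        Complex.exp (2 * π * Complex.I * η * x)).aestronglyMeasurable
      (ae_of_all _ fun x => by
        rw [show 2 * π * Complex.I * η * x = ((2 * π * η * x : ℝ) : ℂ) * Complex.I by
          push_cast; ring, Complex.norm_exp_ofReal_mul_I])
  have hcos : ∀ x : ℝ, (cos (2 * π * (θ + ξ * x)) : ℂ) * conj (g x)
      = (Complex.exp (2 * π * Complex.I * θ)
          * (Complex.exp (2 * π * Complex.I * ξ * x) * conj (g x))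
        + Complex.exp (-(2 * π * Complex.I * θ))
          * (Complex.exp (2 * π * Complex.I * (-ξ : ℝ) * x) * conj (g x))) / 2 := fun x => by
    rw [Complex.ofReal_cos, Complex.cos, ← mul_assoc, ← mul_assoc, ← Complex.exp_add,
      ← Complex.exp_add]
    push_cast
    ring_nf
  simp_rw [hcos]
  rw [integral_div, integral_add ((hexp ξ).const_mul _) ((hexp (-ξ)).const_mul _),
    integral_const_mul, integral_const_mul, ← conj_fourier_eq_integral_s6,
    ← conj_fourier_eq_integral_s6]

theorem integral_cos_mul_conj_deriv (ψ : 𝓢(ℝ, ℂ)) {ξ : ℝ} (hξ : 𝓕 (⇑ψ) (-ξ) = 0) (θ : ℝ) :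
    ∫ x : ℝ, (cos (2 * π * (θ + ξ * x)) : ℂ) * conj (deriv ψ x)
      = -(π * Complex.I * ξ * Complex.exp (2 * π * Complex.I * θ) * conj (𝓕 (⇑ψ) ξ)) := by
  rw [integral_cos_mul_conj ψ.integrable_deriv,
    Real.fourier_deriv ψ.integrable ψ.differentiable ψ.integrable_deriv]
  simp only [smul_eq_mul, map_mul, hξ, Complex.conj_I, Complex.conj_ofReal, map_ofNat, map_zero,
    mul_zero, add_zero]
  ring

theorem neg_inv_mul_cwt_deriv_cos (ψ : 𝓢(ℝ, ℂ)) {a ν : ℝ} (ha : 0 < a) (hν : 𝓕 (⇑ψ) (-(a * ν)) = 0)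
    (A₀ θ b : ℝ) :
    -(a : ℂ)⁻¹ * CWT (deriv ψ) (fun t => ((A₀ * cos (2 * π * (θ + ν * (t - b))) : ℝ) : ℂ)) a b
      = π * Complex.I * A₀ * ν * Complex.exp (2 * π * Complex.I * θ) * √a
        * conj (𝓕 (⇑ψ) (a * ν)) := by
  rw [cwt_eq_sqrt_mul_integral _ _ ha]
  simp_rw [add_sub_cancel_left, Complex.ofReal_mul, mul_assoc (A₀ : ℂ),
    show ∀ x : ℝ, ν * (a * x) = (a * ν) * x from fun x => by ring]
  rw [integral_const_mul, integral_cos_mul_conj_deriv ψ hν]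
  have : (a : ℂ) ≠ 0 := by exact_mod_cast ha.ne'
  push_cast
  field_simp

theorem hasDerivAt_cwt (ψ : 𝓢(ℝ, ℂ)) {f : ℝ → ℂ} (hf : AEStronglyMeasurable f) {C : ℝ}
    (hC : ∀ t, ‖f t‖ ≤ C) {a : ℝ} (ha : 0 < a) (b : ℝ) :
    HasDerivAt (CWT ψ f a) (-(a : ℂ)⁻¹ * CWT (deriv ψ) f a b) b := by
  obtain ⟨D, hD0, hD⟩ := (SchwartzMap.derivCLM ℝ ℂ ψ).exists_norm_le_mul_inv_one_add_sq
  rw [ψ.coe_derivCLM] at hD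
  have hC0 : 0 ≤ C := (norm_nonneg _).trans (hC 0)
  have h_diff : ∀ t x : ℝ, HasDerivAt (fun x => f t * conj (ψ ((t - x) / a)))
      (f t * (-(a : ℂ)⁻¹ * conj (deriv ψ ((t - x) / a)))) x := fun t x => by
    have hin : HasDerivAt (fun x : ℝ => (t - x) / a) (-a⁻¹) x := by
      simpa [neg_div] using ((hasDerivAt_id x).const_sub t).div_const a
    refine (((ψ.differentiableAt.hasDerivAt).scomp x hin).star.const_mul (f t)).congr_deriv ?_
    simp [Complex.real_smul]
  have h_bound : ∀ t, ∀ x ∈ Metric.ball b a,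
      ‖f t * (-(a : ℂ)⁻¹ * conj (deriv ψ ((t - x) / a)))‖
        ≤ C * (a⁻¹ * (D * (4 * (1 + ((t - b) / a) ^ 2)⁻¹))) := fun t x hx => by
    have hv : |(x - b) / a| ≤ 1 := by
      rw [abs_div, abs_of_pos ha, div_le_one ha]
      exact (Metric.mem_ball.1 hx).le
    rw [show (t - x) / a = (t - b) / a - (x - b) / a by ring, norm_mul, norm_mul, norm_neg,
      norm_inv, Complex.norm_real, Real.norm_of_nonneg ha.le, RCLike.norm_conj]
    gcongr
    · exact hC t
    · exact (hD _).trans (by gcongr; exact inv_one_add_sq_sub_le _ hv)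
  have h_int : Integrable fun t => C * (a⁻¹ * (D * (4 * (1 + ((t - b) / a) ^ 2)⁻¹))) :=
    ((((integrable_inv_one_add_sq.comp_div ha.ne').comp_sub_right b).const_mul 4).const_mul
      D |>.const_mul _).const_mul _
  have h_meas : ∀ x, AEStronglyMeasurable fun t => f t * conj (ψ ((t - x) / a)) := fun x =>
    hf.mul (by fun_prop : Continuous fun t => conj (ψ ((t - x) / a))).aestronglyMeasurable
  obtain ⟨-, hderiv⟩ := hasDerivAt_integral_of_dominated_loc_of_deriv_le
    (Metric.ball_mem_nhds b ha) (.of_forall h_meas)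
    (integrable_mul_conj_comp_div ψ.integrable hf hC ha.ne' b)
    (hf.mul (by rw [← ψ.coe_derivCLM]; fun_prop :
      Continuous fun t => -(a : ℂ)⁻¹ * conj (deriv ψ ((t - b) / a))).aestronglyMeasurable)
    (ae_of_all _ h_bound) h_int (ae_of_all _ fun t x _ => h_diff t x)
  refine (hderiv.const_mul ((√a : ℂ)⁻¹)).congr_deriv ?_
  simp_rw [CWT, fun t => mul_left_comm (f t) (-(a : ℂ)⁻¹), integral_const_mul]
  ring

theorem norm_neg_inv_mul_cwt_deriv_le (ψ : 𝓢(ℝ, ℂ)) {h : ℝ → ℂ} {a : ℝ} (ha : 0 < a) (b : ℝ)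
    {K M : ℝ}
    (hh : ∀ t, ‖h t‖ ≤ K * |t - b| + π * M * K * (t - b) ^ 2) :
    ‖-(a : ℂ)⁻¹ * CWT (deriv ψ) h a b‖
      ≤ K * √a * ((∫ x, |x| * ‖deriv ψ x‖) + π * M * a * ∫ x, x ^ 2 * ‖deriv ψ x‖) := by
  have h₁ : Integrable fun x : ℝ => |x| * ‖deriv ψ x‖ := by
    simpa [ψ.coe_derivCLM] using (SchwartzMap.derivCLM ℝ ℂ ψ).integrable_pow_mul volume 1
  have h₂ : Integrable fun x : ℝ => x ^ 2 * ‖deriv ψ x‖ := by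
    simpa [ψ.coe_derivCLM, sq_abs] using (SchwartzMap.derivCLM ℝ ℂ ψ).integrable_pow_mul volume 2
  have hw : ∀ x : ℝ, (K * |a * x| + π * M * K * (a * x) ^ 2) * ‖deriv ψ x‖
      = K * a * (|x| * ‖deriv ψ x‖) + π * M * K * a ^ 2 * (x ^ 2 * ‖deriv ψ x‖) := fun x => by
    rw [abs_mul, abs_of_pos ha]
    ring
  have hbound : ‖CWT (deriv ψ) h a b‖
      ≤ √a * ∫ x, (K * |a * x| + π * M * K * (a * x) ^ 2) * ‖deriv ψ x‖ :=
    norm_cwt_le ha b (by simp_rw [hw]; exact (h₁.const_mul _).add (h₂.const_mul _))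
    (fun x => by simpa using hh (b + a * x))
  simp_rw [hw] at hbound
  rw [integral_add (h₁.const_mul _) (h₂.const_mul _), integral_const_mul, integral_const_mul]
    at hbound
  rw [norm_mul, norm_neg, norm_inv, Complex.norm_real, Real.norm_of_nonneg ha.le]
  calc a⁻¹ * ‖CWT (deriv ψ) h a b‖
      ≤ a⁻¹ * (√a * (K * a * (∫ x, |x| * ‖deriv ψ x‖)
          + π * M * K * a ^ 2 * ∫ x, x ^ 2 * ‖deriv ψ x‖)) := by gcongr
    _ = _ := by field_simp

theorem norm_ofReal_mul_cos_le (r x : ℝ) : ‖((r * cos x : ℝ) : ℂ)‖ ≤ |r| := by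
  rw [Complex.norm_real, Real.norm_eq_abs, abs_mul]
  exact mul_le_of_le_one_right (abs_nonneg r) (abs_cos_le_one x)

theorem stmt6_general (ψ : SchwartzMap ℝ ℂ) (Δ : ℝ) (hΔ1 : Δ < 1)
    (hsupp : ∀ ξ : ℝ, ξ ∉ Set.Icc (1 - Δ) (1 + Δ) → FourierTransform.fourier (⇑ψ : ℝ → ℂ) ξ = 0)
    (ε c₁ M₂ : ℝ) (hε : 0 < ε) (hc₁ : 0 < c₁)
    (A : ℝ → ℝ) (φ : ℝ → ℝ) (f : ℝ → ℂ)
    (hf : ∀ t : ℝ, f t = ((A t * Real.cos (2 * Real.pi * φ t) : ℝ) : ℂ))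
    (hA : ContDiff ℝ 1 A) (hAbd : BddAbove (Set.range A)) (hApos : ∀ t : ℝ, 0 < A t)
    (hφ : ContDiff ℝ 2 φ)
    (hφ'lo : ∀ t : ℝ, c₁ ≤ deriv φ t) (hφ'hi : ∀ t : ℝ, deriv φ t ≤ M₂)
    (hA' : ∀ t : ℝ, |deriv A t| ≤ ε * deriv φ t)
    (hφ'' : ∀ t : ℝ, |deriv (deriv φ) t| ≤ ε * deriv φ t)
    (I₁' I₂' Asup : ℝ)
    (hI₁' : I₁' = ∫ x : ℝ, |x| * ‖deriv (⇑ψ) x‖)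
    (hI₂' : I₂' = ∫ x : ℝ, x ^ 2 * ‖deriv (⇑ψ) x‖)
    (hAsup : Asup = sSup (Set.range A)) :
    ∀ a : ℝ, 0 < a → ∀ b : ℝ,
      ∃ W' : ℂ, HasDerivAt (fun b' : ℝ => CWT (⇑ψ) f a b') W' b ∧
        ‖W' -
            Real.pi * Complex.I * (A b : ℂ) * ((deriv φ b : ℝ) : ℂ) *
              Complex.exp (2 * Real.pi * Complex.I * φ b) *
              ((Real.sqrt a : ℝ) : ℂ) *
              (starRingEnd ℂ) (FourierTransform.fourier (⇑ψ : ℝ → ℂ) (a * deriv φ b))‖ ≤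
          ε * M₂ * Real.sqrt a * (I₁' + Real.pi * Asup * a * I₂') := by
  intro a ha b
  have hA_le : ∀ t, |A t| ≤ Asup := fun t => by
    rw [abs_of_pos (hApos t), hAsup]
    exact le_csSup hAbd (Set.mem_range_self t)
  have hf_le : ∀ t, ‖f t‖ ≤ Asup := fun t => hf t ▸ (norm_ofReal_mul_cos_le _ _).trans (hA_le t)
  have hf_cont : Continuous f := by
    rw [funext hf]
    fun_prop
  set f₀ : ℝ → ℂ := fun t => ((A b * cos (2 * π * (φ b + deriv φ b * (t - b))) : ℝ) : ℂ)
  have hf₀_le : ∀ t, ‖f₀ t‖ ≤ Asup := fun t => (norm_ofReal_mul_cos_le _ _).trans (hA_le b)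
  have hneg : -(a * deriv φ b) ∉ Set.Icc (1 - Δ) (1 + Δ) := fun hmem => by
    nlinarith [hmem.1, mul_pos ha (hc₁.trans_le (hφ'lo b))]
  have hεφ : ∀ t, ε * deriv φ t ≤ ε * M₂ := fun t => mul_le_mul_of_nonneg_left (hφ'hi t) hε.le
  have hdiff : ∀ t, ‖(f - f₀) t‖
      ≤ ε * M₂ * |t - b| + π * Asup * (ε * M₂) * (t - b) ^ 2 := fun t => by
    rw [Pi.sub_apply, hf, ← Complex.ofReal_sub, Complex.norm_real, Real.norm_eq_abs]
    exact abs_mul_cos_sub_mul_cos_le (hA.differentiable one_ne_zero)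
      (hφ.differentiable two_ne_zero) hφ.differentiable_deriv_two
      (fun t => (hA' t).trans (hεφ t)) (fun t => (hφ'' t).trans (hεφ t)) (hA_le b) t
  refine ⟨_, hasDerivAt_cwt ψ hf_cont.aestronglyMeasurable hf_le ha b, ?_⟩
  have hf₀_cont : Continuous f₀ := by fun_prop
  rw [← neg_inv_mul_cwt_deriv_cos ψ ha (hsupp _ hneg), ← mul_sub,
    cwt_sub (integrable_mul_conj_comp_div ψ.integrable_deriv hf_cont.aestronglyMeasurable hf_le
        ha.ne' b)
      (integrable_mul_conj_comp_div ψ.integrable_deriv hf₀_cont.aestronglyMeasurable hf₀_le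
        ha.ne' b),
    hI₁', hI₂']
  exact norm_neg_inv_mul_cwt_deriv_le ψ ha b hdiff

theorem stmt6 (ψ : SchwartzMap ℝ ℂ) (Δ : ℝ) (hΔ0 : 0 < Δ) (hΔ1 : Δ < 1)
    (hsupp : ∀ ξ : ℝ, ξ ∉ Set.Icc (1 - Δ) (1 + Δ) → FourierTransform.fourier (⇑ψ : ℝ → ℂ) ξ = 0)
    (ε c₁ M₂ : ℝ) (hε : 0 < ε) (hc₁ : 0 < c₁) (hc₁M₂ : c₁ ≤ M₂)
    (A : ℝ → ℝ) (φ : ℝ → ℝ) (f : ℝ → ℂ)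
    (hf : ∀ t : ℝ, f t = ((A t * Real.cos (2 * Real.pi * φ t) : ℝ) : ℂ))
    (hA : ContDiff ℝ 1 A) (hAbd : BddAbove (Set.range A)) (hApos : ∀ t : ℝ, 0 < A t)
    (hφ : ContDiff ℝ 2 φ)
    (hφ'lo : ∀ t : ℝ, c₁ ≤ deriv φ t) (hφ'hi : ∀ t : ℝ, deriv φ t ≤ M₂)
    (hA' : ∀ t : ℝ, |deriv A t| ≤ ε * deriv φ t)
    (hφ'' : ∀ t : ℝ, |deriv (deriv φ) t| ≤ ε * deriv φ t)
    (I₁' I₂' Asup : ℝ)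
    (hI₁' : I₁' = ∫ x : ℝ, |x| * ‖deriv (⇑ψ) x‖)
    (hI₂' : I₂' = ∫ x : ℝ, x ^ 2 * ‖deriv (⇑ψ) x‖)
    (hAsup : Asup = sSup (Set.range A)) :
    ∀ a : ℝ, 0 < a → ∀ b : ℝ,
      ∃ W' : ℂ, HasDerivAt (fun b' : ℝ => CWT (⇑ψ) f a b') W' b ∧
        ‖W' -
            Real.pi * Complex.I * (A b : ℂ) * ((deriv φ b : ℝ) : ℂ) *
              Complex.exp (2 * Real.pi * Complex.I * φ b) *
              ((Real.sqrt a : ℝ) : ℂ) *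
              (starRingEnd ℂ) (FourierTransform.fourier (⇑ψ : ℝ → ℂ) (a * deriv φ b))‖ ≤
          ε * M₂ * Real.sqrt a * (I₁' + Real.pi * Asup * a * I₂') :=
  stmt6_general ψ Δ hΔ1 hsupp ε c₁ M₂ hε hc₁ A φ f hf hA hAbd hApos hφ hφ'lo hφ'hi hA' hφ'' I₁' I₂'
    Asup hI₁' hI₂' hAsup
end
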